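/- Let A ∈ ℂ^{N×N} be a nonzero Hermitian 3-PMP matrix, and let π = {I₁, ..., I_m} be the coarsest partition of {1,...,N} such that A is constant on each block I_i × I_j. Then the simultaneous kernel ∩_{n≥0} ker A^{∘n} of all Hadamard powers of A equals ker(⊕_{j=1}^m J_{I_j}), where J_{I_j} is the all-ones matrix on block I_j; equivalently it equals {v ∈ ℂ^N : Σ_{i ∈ I_j} v_i = 0 for all j}. -/

import Mathlib

open Matrix
open scoped ComplexOrder Classical

/-- A Hermitian matrix is `k`-PMP if all its principal minors of size at most `k`
are non-negative. -/
def kPMP {N : ℕ} (k : ℕ) (A : Matrix (Fin N) (Fin N) ℂ) : Prop :=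
  ∀ S : Finset (Fin N), S.card ≤ k →
    0 ≤ (A.submatrix (fun i : S => (i : Fin N)) (fun i : S => (i : Fin N))).det

/-!
Blocks of the coarsest partition are the classes of equal rows. Hadamard powers reach every
polynomial in the entries of a row, so for `v` in the joint kernel and every row `i` the sum of
`v` over each level set `{k | A i k = c}` vanishes. By the `3 × 3` minors, two indices with
`A i j = A i i = A j j` have equal rows; by the `2 × 2` minors, every other class in the level
set `{k | A i k = A i i}` has a strictly larger diagonal entry. Descending induction on the
diagonal entry therefore peels off the class of `i` from that level set.
-/

open Finset Polynomial

section Fibers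

variable {ι : Type*} [Fintype ι]

theorem sum_mul_eq_zero_of_sum_fiber_eq_zero {β R : Type*} [NonUnitalNonAssocSemiring R]
    (φ : ι → β) {E : Finset ι} (hE : ∀ k ∈ E, ∀ k', φ k' = φ k → k' ∈ E) {g v : ι → R}
    (hg : ∀ k k', φ k' = φ k → g k' = g k)
    (hv : ∀ k ∈ E, ∑ i ∈ univ.filter (fun i => φ i = φ k), v i = 0) :
    ∑ k ∈ E, g k * v k = 0 := by
  rw [← sum_fiberwise_of_maps_to fun k hk => mem_image_of_mem φ hk]
  refine sum_eq_zero fun b hb => ?_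
  obtain ⟨k, hk, rfl⟩ := mem_image.mp hb
  have hfiber : E.filter (fun i => φ i = φ k) = univ.filter (fun i => φ i = φ k) := by
    ext i
    simpa using hE k hk i
  rw [hfiber, sum_congr rfl fun i hi => by rw [hg k i (mem_filter.mp hi).2], ← mul_sum,
    hv k hk, mul_zero]

theorem sum_eval_mul_eq_zero_of_sum_pow_mul_eq_zero {R : Type*} [CommSemiring R] {f v : ι → R}
    (h : ∀ n, ∑ k, f k ^ n * v k = 0) (p : R[X]) : ∑ k, p.eval (f k) * v k = 0 := by
  simp_rw [eval_eq_sum_range, sum_mul]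
  rw [sum_comm]
  refine sum_eq_zero fun n _ => ?_
  simp_rw [mul_assoc, ← mul_sum, h n, mul_zero]

theorem sum_filter_eq_zero_of_sum_pow_mul_eq_zero {K : Type*} [Field K] {f v : ι → K}
    (h : ∀ n, ∑ k, f k ^ n * v k = 0) (c : K) :
    ∑ k ∈ univ.filter (fun k => f k = c), v k = 0 := by
  by_cases hc : c ∈ univ.image f
  · -- the Lagrange basis polynomial of `c` on the values of `f` is the indicator of `c`
    rw [sum_filter]
    refine (sum_congr rfl fun k _ => ?_).trans
      (sum_eval_mul_eq_zero_of_sum_pow_mul_eq_zero h (Lagrange.basis (univ.image f) id c))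
    by_cases hk : f k = c
    · have h1 : (Lagrange.basis (univ.image f) id c).eval c = 1 :=
        Lagrange.eval_basis_self (Set.injOn_id _) hc
      rw [if_pos hk, hk, h1, one_mul]
    · have h0 : (Lagrange.basis (univ.image f) id c).eval (f k) = 0 :=
        Lagrange.eval_basis_of_ne (v := id) (Ne.symm hk) (mem_image_of_mem f (mem_univ k))
      rw [if_neg hk, h0, zero_mul]
  · rw [filter_false_of_mem fun k _ => ?_, sum_empty]
    rintro rfl
    exact hc (mem_image_of_mem f (mem_univ k))

end Fibers

section BlockConstant

variable {n α : Type*} {A : Matrix n n α}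

def Matrix.IsBlockConstant (A : Matrix n n α) (s : Setoid n) : Prop :=
  ∀ i i' j j', s.r i i' → s.r j j' → A i j = A i' j'

theorem Matrix.IsBlockConstant.le_ker {s : Setoid n} (h : A.IsBlockConstant s) :
    s ≤ Setoid.ker fun i => A i :=
  fun i i' hi => funext fun j => h i i' j j hi (s.refl j)

theorem Matrix.IsHermitian.apply_eq_of_row_eq [Star α] (hA : A.IsHermitian) {k k' : n}
    (hk : A k' = A k) (i : n) : A i k' = A i k := by
  rw [← hA.apply i k', ← hA.apply i k, hk]

theorem Matrix.IsHermitian.isBlockConstant_ker [Star α] (hA : A.IsHermitian) :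
    A.IsBlockConstant (Setoid.ker fun i => A i) := by
  intro i i' j j' hi hj
  rw [Setoid.ker_def] at hi hj
  rw [hi, hA.apply_eq_of_row_eq hj]

end BlockConstant

namespace kPMP

variable {N : ℕ} {A : Matrix (Fin N) (Fin N) ℂ}

theorem mono {j k : ℕ} (h : kPMP k A) (hjk : j ≤ k) : kPMP j A :=
  fun S hS => h S (hS.trans hjk)

theorem det_submatrix_nonneg {k m : ℕ} (h : kPMP k A) (hm : m ≤ k) {f : Fin m → Fin N}
    (hf : Function.Injective f) : 0 ≤ (A.submatrix f f).det := by
  let S := univ.map ⟨f, hf⟩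
  let e : Fin m ≃ S := Equiv.ofBijective (fun a => ⟨f a, mem_map_of_mem _ (mem_univ a)⟩)
    ⟨fun a b hab => hf (congrArg Subtype.val hab), fun ⟨x, hx⟩ => by
      obtain ⟨a, -, rfl⟩ := mem_map.mp hx
      exact ⟨a, rfl⟩⟩
  have hS := h S (by simpa [S] using hm)
  rwa [← det_submatrix_equiv_self e] at hS

theorem diag_nonneg (h : kPMP 1 A) (i : Fin N) : 0 ≤ A i i := by
  simpa using h.det_submatrix_nonneg le_rfl (Function.injective_of_subsingleton fun _ : Fin 1 => i)

theorem mul_star_le (h : kPMP 2 A) (hA : A.IsHermitian) {i j : Fin N} (hij : i ≠ j) :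
    A i j * star (A i j) ≤ A i i * A j j := by
  have hinj : Function.Injective ![i, j] := by
    intro a b
    fin_cases a <;> fin_cases b <;> simp [hij, hij.symm]
  have hdet := h.det_submatrix_nonneg le_rfl hinj
  simp only [det_fin_two, submatrix_apply, cons_val_zero, cons_val_one,
    ← hA.apply j i] at hdet
  exact sub_nonneg.mp hdet

theorem apply_eq_zero_of_diag_eq_zero (h : kPMP 2 A) (hA : A.IsHermitian) {i : Fin N}
    (hi : A i i = 0) (k : Fin N) : A i k = 0 := by
  rcases eq_or_ne i k with rfl | hik
  · exact hi
  · have hle := h.mul_star_le hA hik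
    rw [hi, zero_mul] at hle
    exact (CStarRing.mul_star_self_eq_zero_iff _).mp (hle.antisymm (mul_star_self_nonneg _))

/-- Two indices `i`, `j` with `A i j = A j j = A i i` have equal rows: the `3 × 3` minor on
`i, j, k` equals `-A i i * |A i k - A j k| ^ 2`. -/
theorem row_eq_of_apply_eq_diag (h : kPMP 3 A) (hA : A.IsHermitian) {i j : Fin N}
    (hij : A i j = A i i) (hjj : A j j = A i i) : A i = A j := by
  have h2 : kPMP 2 A := h.mono (by norm_num)
  have hii : star (A i i) = A i i := hA.apply i i
  have hji : A j i = A i i := by rw [← hA.apply j i, hij, hii]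
  funext k
  rcases eq_or_ne i j with rfl | hne
  · rfl
  rcases eq_or_ne k i with rfl | hki
  · exact hji.symm
  rcases eq_or_ne k j with rfl | hkj
  · rw [hij, hjj]
  have hinj : Function.Injective ![i, j, k] := by
    intro a b
    fin_cases a <;> fin_cases b <;> simp [hne, hki, hkj, hne.symm, hki.symm, hkj.symm]
  have hdet := h.det_submatrix_nonneg le_rfl hinj
  set z := A i k - A j k
  have hdet_eq : (A.submatrix ![i, j, k] ![i, j, k]).det = -(A i i * (z * star z)) := by
    rw [det_fin_three]
    simp only [submatrix_apply, Matrix.cons_val_zero, Matrix.cons_val_one, Matrix.cons_val_two,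
      Matrix.head_cons, Matrix.tail_cons, hij, hjj, hji, ← hA.apply k i, ← hA.apply k j, z,
      star_sub]
    ring
  have hzero : A i i * (z * star z) = 0 :=
    (neg_nonneg.mp (hdet_eq ▸ hdet)).antisymm
      (mul_nonneg ((h2.mono one_le_two).diag_nonneg i) (mul_star_self_nonneg z))
  rcases mul_eq_zero.mp hzero with hi0 | hz
  · rw [h2.apply_eq_zero_of_diag_eq_zero hA hi0,
      h2.apply_eq_zero_of_diag_eq_zero hA (hjj.trans hi0)]
  · exact sub_eq_zero.mp ((CStarRing.mul_star_self_eq_zero_iff z).mp hz)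

theorem diag_lt_of_apply_eq_diag (h : kPMP 2 A) (hA : A.IsHermitian) {i k : Fin N}
    (hik : A i k = A i i) (hkk : A k k ≠ A i i) : A i i < A k k := by
  have hle := h.mul_star_le hA (i := i) (j := k) (by rintro rfl; exact hkk rfl)
  rw [hik, hA.apply i i] at hle
  have hi := (h.mono one_le_two).diag_nonneg i
  refine lt_of_le_of_ne ?_ hkk.symm
  rcases hi.eq_or_lt with hi0 | hipos
  · exact hi0 ▸ (h.mono one_le_two).diag_nonneg k
  · exact le_of_mul_le_mul_left hle hipos

theorem sum_filter_row_eq_zero (h : kPMP 3 A) (hA : A.IsHermitian) {v : Fin N → ℂ}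
    (hv : ∀ i c, ∑ k ∈ univ.filter (fun k => A i k = c), v k = 0) (i₀ : Fin N) :
    ∑ i ∈ univ.filter (fun i => A i = A i₀), v i = 0 := by
  induction i₀ using (Finite.wellFounded_of_trans_of_irrefl fun a b => A b b < A a a).induction
    with
  | _ i₀ ih =>
  set T := univ.filter fun k => A i₀ k = A i₀ i₀
  have hclass : T.filter (fun k => A k = A i₀) = univ.filter (fun k => A k = A i₀) := by
    ext k
    simp only [T, mem_filter, mem_univ, true_and, and_iff_right_iff_imp]
    exact fun hk => hA.apply_eq_of_row_eq hk i₀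
  have hrest : ∑ k ∈ T.filter (fun k => ¬A k = A i₀), 1 * v k = 0 := by
    refine sum_mul_eq_zero_of_sum_fiber_eq_zero (fun k => A k) (fun k hk k' hk' => ?_)
      (fun _ _ _ => rfl) (fun k hk => ?_)
    · simp only [T, mem_filter, mem_univ, true_and] at hk ⊢
      exact ⟨(hA.apply_eq_of_row_eq hk' i₀).trans hk.1, hk' ▸ hk.2⟩
    · simp only [T, mem_filter, mem_univ, true_and] at hk
      refine ih k ((h.mono (by norm_num)).diag_lt_of_apply_eq_diag hA hk.1 fun hkk => ?_)
      exact hk.2 (h.row_eq_of_apply_eq_diag hA hk.1 hkk).symm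
  have hT : ∑ k ∈ T, v k = 0 := hv i₀ _
  simp only [one_mul] at hrest
  rwa [← sum_filter_add_sum_filter_not T (fun k => A k = A i₀), hrest, add_zero, hclass] at hT

end kPMP

theorem stmt18_general {N : ℕ} (A : Matrix (Fin N) (Fin N) ℂ) (hA : A.IsHermitian)
    (h3 : kPMP 3 A)
    (s : Setoid (Fin N))
    (hconst : ∀ i i' j j' : Fin N, s.r i i' → s.r j j' → A i j = A i' j')
    (hcoarsest : ∀ t : Setoid (Fin N),
      (∀ i i' j j' : Fin N, t.r i i' → t.r j j' → A i j = A i' j') → t ≤ s)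
    (v : Fin N → ℂ) :
    (∀ n : ℕ, (Matrix.of fun i j => (A i j) ^ n).mulVec v = 0) ↔
      ∀ i₀ : Fin N, ∑ i ∈ Finset.univ.filter (fun i => s.r i i₀), v i = 0 := by
  obtain rfl : s = Setoid.ker fun i => A i :=
    le_antisymm (IsBlockConstant.le_ker hconst) (hcoarsest _ hA.isBlockConstant_ker)
  simp only [Setoid.ker_def]
  constructor
  · intro hv
    exact h3.sum_filter_row_eq_zero hA fun i =>
      sum_filter_eq_zero_of_sum_pow_mul_eq_zero fun n => congrFun (hv n) i
  · intro hv n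
    funext i
    exact sum_mul_eq_zero_of_sum_fiber_eq_zero (fun k => A k) (fun _ _ _ _ => mem_univ _)
      (fun _ _ hk => congrArg (· ^ n) (hA.apply_eq_of_row_eq hk i)) fun k _ => hv k

/-- Let `A` be a nonzero Hermitian `3`-PMP matrix and let `s` be the coarsest
partition of the index set (encoded as a setoid) such that `A` is constant on
each block `I_i × I_j`. Then the simultaneous kernel `⋂_{n ≥ 0} ker A^{∘n}` of
all Hadamard powers of `A` equals the kernel of `⊕_j J_{I_j}`, i.e. the set of
vectors whose coordinates sum to zero over each block of `s`. -/
theorem stmt18 {N : ℕ} (A : Matrix (Fin N) (Fin N) ℂ) (hA : A.IsHermitian)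
    (hA0 : A ≠ 0) (h3 : kPMP 3 A)
    (s : Setoid (Fin N))
    (hconst : ∀ i i' j j' : Fin N, s.r i i' → s.r j j' → A i j = A i' j')
    (hcoarsest : ∀ t : Setoid (Fin N),
      (∀ i i' j j' : Fin N, t.r i i' → t.r j j' → A i j = A i' j') → t ≤ s)
    (v : Fin N → ℂ) :
    (∀ n : ℕ, (Matrix.of fun i j => (A i j) ^ n).mulVec v = 0) ↔
      ∀ i₀ : Fin N, ∑ i ∈ Finset.univ.filter (fun i => s.r i i₀), v i = 0 :=
  stmt18_general A hA h3 s hconst hcoarsest v
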